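/- Assume D is a block (D is nonzero, every object is a finite direct sum of indecomposables, and the indecomposable objects are path-connected) which is non-degenerate: for every indecomposable X there exists a nonzero non-invertible morphism Y → X or X → Y′ with Y, Y′ indecomposable. If there is a path from an indecomposable X to an indecomposable Y, then there exists a sequence X = X₀, X₁, …, X_t = Y of indecomposable objects with Hom(X_{i-1}, X_i) ≠ 0 for all 1 ≤ i ≤ t. -/

import Mathlib

open CategoryTheory CategoryTheory.Limits CategoryTheory.Pretriangulated

universe v u

variable (C : Type u) [Category.{v} C] [Preadditive C] [HasZeroObject C]
  [HasShift C ℤ] [∀ n : ℤ, (shiftFunctor C n).Additive] [Pretriangulated C]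
  [HasFiniteBiproducts C]

/-- An object is indecomposable if it is nonzero and any biproduct decomposition is trivial. -/
def Indec (X : C) : Prop :=
  ¬ IsZero X ∧ ∀ (A B : C), (X ≅ A ⊞ B) → IsZero A ∨ IsZero B

/-- There is a path from `X` to `Y`: a sequence of indecomposables where each consecutive
pair admits a nonzero morphism, or the next one is the shift of the previous one. -/
def HasPath (X Y : C) : Prop :=
  ∃ (n : ℕ) (f : Fin (n + 1) → C), f 0 = X ∧ f (Fin.last n) = Y ∧
    (∀ i, Indec C (f i)) ∧
    ∀ i : Fin n, (∃ g : f i.castSucc ⟶ f i.succ, g ≠ 0) ∨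
      Nonempty (f i.succ ≅ (f i.castSucc)⟦(1 : ℤ)⟧)

/-- Two indecomposables are connected by a sequence of paths and inverse paths. -/
def PathConn (X Y : C) : Prop :=
  ∃ (n : ℕ) (f : Fin (n + 1) → C), f 0 = X ∧ f (Fin.last n) = Y ∧
    (∀ i, Indec C (f i)) ∧
    ∀ i : Fin n, (∃ g : f i.castSucc ⟶ f i.succ, g ≠ 0) ∨
      (∃ g : f i.succ ⟶ f i.castSucc, g ≠ 0) ∨
      ∃ s : ℤ, Nonempty (f i.succ ≅ (f i.castSucc)⟦s⟧)

/-- Every object is a finite direct sum of indecomposable objects. -/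
def EveryObjectDecomposes : Prop :=
  ∀ X : C, ∃ (n : ℕ) (f : Fin n → C), (∀ i, Indec C (f i)) ∧ Nonempty (X ≅ ⨁ f)

/-- `D` is a block: nonzero, Krull-Schmidt-type decomposition, and path-connected. -/
def IsBlock : Prop :=
  (∃ X : C, ¬ IsZero X) ∧ EveryObjectDecomposes C ∧
    ∀ X Y : C, Indec C X → Indec C Y → PathConn C X Y

/-- `add S`: objects isomorphic to finite direct sums of objects of `S`. -/
def addClosure (S : Set C) : Set C :=
  {X | ∃ (n : ℕ) (f : Fin n → C), (∀ i, f i ∈ S) ∧ Nonempty (X ≅ ⨁ f)}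

/-- A `t`-structure `(D^{≤0}, D^{≥0})` on `C`. -/
structure TStruct where
  le : Set C
  ge : Set C
  le_iso : ∀ ⦃X Y : C⦄, (X ≅ Y) → X ∈ le → Y ∈ le
  ge_iso : ∀ ⦃X Y : C⦄, (X ≅ Y) → X ∈ ge → Y ∈ ge
  hom_zero : ∀ ⦃X Y : C⦄, X ∈ le → Y ∈ ge → ∀ f : X ⟶ Y⟦(-1 : ℤ)⟧, f = 0
  le_shift : ∀ ⦃X : C⦄, X ∈ le → X⟦(1 : ℤ)⟧ ∈ le
  ge_shift : ∀ ⦃X : C⦄, X ∈ ge → X⟦(-1 : ℤ)⟧ ∈ ge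
  exists_triangle : ∀ X : C, ∃ (A B : C) (f : A ⟶ X) (g : X ⟶ B⟦(-1 : ℤ)⟧)
      (h : B⟦(-1 : ℤ)⟧ ⟶ A⟦(1 : ℤ)⟧),
      (Triangle.mk f g h ∈ distTriang C) ∧ A ∈ le ∧ B ∈ ge

variable {C}

/-- The heart of a t-structure. -/
def TStruct.heart (t : TStruct C) : Set C := t.le ∩ t.ge

/-- A t-structure is bounded if every object lies in `D^{≤n} ∩ D^{≥m}` for some `m ≤ n`,
where `X ∈ D^{≤n} := D^{≤0}[-n]` iff `X⟦n⟧ ∈ D^{≤0}`, and similarly for `D^{≥m}`. -/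
def TStruct.Bounded (t : TStruct C) : Prop :=
  ∀ X : C, ∃ m n : ℤ, m ≤ n ∧ X⟦n⟧ ∈ t.le ∧ X⟦m⟧ ∈ t.ge

/-- A bounded t-structure is hereditary if `Hom(X, Y⟦n⟧) = 0` for all `X`, `Y` in the heart
and `n ≥ 2`. -/
def TStruct.Hereditary (t : TStruct C) : Prop :=
  t.Bounded ∧ ∀ ⦃X Y : C⦄, X ∈ t.heart → Y ∈ t.heart →
    ∀ n : ℤ, 2 ≤ n → ∀ f : X ⟶ Y⟦n⟧, f = 0

section Aux

set_option linter.unusedSectionVars false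

lemma isZero_shift_iff' (n : ℤ) (X : C) : IsZero ((shiftFunctor C n).obj X) ↔ IsZero X := by
  rw [IsZero.iff_id_eq_zero, IsZero.iff_id_eq_zero]
  constructor
  · intro h
    apply (shiftFunctor C n).map_injective
    rw [Functor.map_zero, CategoryTheory.Functor.map_id, h]
  · intro h
    rw [← CategoryTheory.Functor.map_id, h, Functor.map_zero]

lemma indec_of_iso {X Y : C} (e : X ≅ Y) (h : Indec C X) : Indec C Y :=
  ⟨fun hz => h.1 (IsZero.of_iso hz e), fun A B e' => h.2 A B (e.trans e')⟩

lemma indec_shift {X : C} (n : ℤ) (h : Indec C X) : Indec C ((shiftFunctor C n).obj X) := by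
  constructor
  · intro hz
    exact h.1 ((isZero_shift_iff' n X).1 hz)
  · intro A B e
    haveI := preservesBinaryBiproduct_of_preservesBiproduct (shiftFunctor C (-n)) A B
    have e2 : X ≅ (shiftFunctor C (-n)).obj A ⊞ (shiftFunctor C (-n)).obj B :=
      ((shiftEquiv C n).unitIso.app X).trans
        (((shiftFunctor C (-n)).mapIso e).trans (Functor.mapBiprod _ A B))
    rcases h.2 _ _ e2 with hz | hz
    · exact Or.inl ((isZero_shift_iff' (-n) A).1 hz)
    · exact Or.inr ((isZero_shift_iff' (-n) B).1 hz)

lemma shift_map_ne {X Y : C} (n : ℤ) {g : X ⟶ Y} (hg : g ≠ 0) :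
    (shiftFunctor C n).map g ≠ 0 := fun h =>
  hg ((shiftFunctor C n).map_injective (by rw [h, Functor.map_zero]))

/-- One nonzero-hom step between indecomposables. -/
def StepRel : C → C → Prop := fun A B => Indec C B ∧ ∃ g : A ⟶ B, g ≠ 0

lemma chain_shift {A B : C} (n : ℤ)
    (h : Relation.ReflTransGen (StepRel (C := C)) A B) :
    Relation.ReflTransGen (StepRel (C := C))
      ((shiftFunctor C n).obj A) ((shiftFunctor C n).obj B) := by
  induction h with
  | refl => exact Relation.ReflTransGen.refl
  | tail _ hR ih =>
    obtain ⟨hi, g, hg⟩ := hR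
    exact ih.tail ⟨indec_shift n hi, (shiftFunctor C n).map g, shift_map_ne n hg⟩

lemma chain_iso_tail {A B B' : C} (h : Relation.ReflTransGen (StepRel (C := C)) A B)
    (hA : Indec C A) (e : B ≅ B') : Relation.ReflTransGen (StepRel (C := C)) A B' := by
  rcases h.cases_tail with rfl | ⟨c, hc, hR⟩
  · refine Relation.ReflTransGen.single ⟨indec_of_iso e hA, e.hom, fun h0 => hA.1 ?_⟩
    rw [IsZero.iff_id_eq_zero, ← e.hom_inv_id, h0, zero_comp]
  · obtain ⟨hi, g, hg⟩ := hR
    refine hc.tail ⟨indec_of_iso e hi, g ≫ e.hom, fun h0 => hg ?_⟩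
    have := congrArg (fun p => p ≫ e.inv) h0
    simpa using this

lemma chain_iso_head {A A' B : C} (e : A' ≅ A) (hA' : Indec C A')
    (h : Relation.ReflTransGen (StepRel (C := C)) A B) :
    Relation.ReflTransGen (StepRel (C := C)) A' B := by
  rcases h.cases_head with rfl | ⟨c, hR, hc⟩
  · refine Relation.ReflTransGen.single ⟨indec_of_iso e hA', e.hom, fun h0 => hA'.1 ?_⟩
    rw [IsZero.iff_id_eq_zero, ← e.hom_inv_id, h0, zero_comp]
  · obtain ⟨hi, g, hg⟩ := hR
    refine Relation.ReflTransGen.head ⟨hi, e.hom ≫ g, fun h0 => hg ?_⟩ hc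
    have := congrArg (fun p => e.inv ≫ p) h0
    simpa using this

/-- Key construction: given a nonzero non-invertible map `u : Y ⟶ Z` with `Y`, `Z`
indecomposable, there is an indecomposable `W` with nonzero maps `Z ⟶ W` and
`W ⟶ Y⟦1⟧`. -/
lemma exists_middle (hdec : EveryObjectDecomposes C) {Z Y : C}
    (hZ : Indec C Z) (hY : Indec C Y) (u : Y ⟶ Z) (hu : u ≠ 0) (hni : ¬ IsIso u) :
    ∃ W : C, Indec C W ∧ (∃ a : Z ⟶ W, a ≠ 0) ∧
      ∃ b : W ⟶ (shiftFunctor C (1 : ℤ)).obj Y, b ≠ 0 := by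
  classical
  obtain ⟨W₀, v, w, hT⟩ := distinguished_cocone_triangle u
  -- v ≠ 0
  have hv : v ≠ 0 := by
    intro hv0
    have h2 : (Triangle.mk u v w).rotate.rotate ∈ distTriang C :=
      rot_of_distTriang _ (rot_of_distTriang _ hT)
    have hz3 : (Triangle.mk u v w).rotate.rotate.mor₃ = 0 := by
      show -(shiftFunctor C (1 : ℤ)).map v = 0
      rw [hv0, Functor.map_zero, neg_zero]
    obtain ⟨e, -⟩ := exists_iso_binaryBiproduct_of_distTriang _ h2 hz3
    rcases (indec_shift 1 hY).2 _ _ e with hz | hz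
    · exact hni (((Triangle.mk u v w).isZero₃_iff_isIso₁ hT).1 hz)
    · exact hZ.1 ((isZero_shift_iff' 1 Z).1 hz)
  obtain ⟨n, fam, hfam, ⟨θ⟩⟩ := hdec W₀
  have key : ∃ i, (v ≫ θ.hom ≫ biproduct.π fam i ≠ 0) ∧
      (biproduct.ι fam i ≫ θ.inv ≫ w ≠ 0) := by
    by_contra hall
    push_neg at hall
    obtain ⟨i₀, hi₀⟩ : ∃ i, v ≫ θ.hom ≫ biproduct.π fam i ≠ 0 := by
      by_contra hzz
      push_neg at hzz
      apply hv
      have hvh : v ≫ θ.hom = 0 := biproduct.hom_ext _ _ fun j => by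
        rw [Category.assoc, hzz j, zero_comp]
      calc v = (v ≫ θ.hom) ≫ θ.inv := by rw [Category.assoc, Iso.hom_inv_id, Category.comp_id]
        _ = 0 := by rw [hvh, zero_comp]
    have hw₀ : biproduct.ι fam i₀ ≫ θ.inv ≫ w = 0 := hall i₀ hi₀
    set ee : (⨁ fam) ⟶ (⨁ fam) :=
      biproduct.map (fun j => if biproduct.ι fam j ≫ θ.inv ≫ w = 0 then 𝟙 (fam j) else 0)
      with hee
    have he : ee ≫ θ.inv ≫ w = 0 := by
      apply biproduct.hom_ext'
      intro j
      rw [biproduct.ι_map_assoc, comp_zero]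
      split_ifs with hj
      · rw [Category.id_comp, hj]
      · rw [zero_comp]
    obtain ⟨t, ht⟩ := Triangle.coyoneda_exact₃ _ hT (θ.hom ≫ ee ≫ θ.inv)
      (by show (θ.hom ≫ ee ≫ θ.inv) ≫ w = 0
          rw [Category.assoc, Category.assoc, he, comp_zero])
    have ht' : θ.hom ≫ ee ≫ θ.inv = t ≫ v := ht
    set vi : Z ⟶ fam i₀ := v ≫ θ.hom ≫ biproduct.π fam i₀ with hvi
    set s : fam i₀ ⟶ Z := biproduct.ι fam i₀ ≫ θ.inv ≫ t with hsdef
    have hs : s ≫ vi = 𝟙 (fam i₀) := by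
      have : s ≫ vi = biproduct.ι fam i₀ ≫ θ.inv ≫ (t ≫ v) ≫ θ.hom ≫ biproduct.π fam i₀ := by
        simp [hsdef, hvi, Category.assoc]
        exact congrArg (biproduct.ι fam i₀ ≫ ·) ((Category.assoc _ _ _).trans
          (congrArg (θ.inv ≫ ·) (Category.assoc _ _ _).symm))
      rw [this, ← ht']
      simp only [Category.assoc, Iso.inv_hom_id, Category.comp_id, Iso.inv_hom_id_assoc]
      rw [hee, biproduct.ι_map_assoc, if_pos hw₀, Category.id_comp, biproduct.ι_π_self]
    obtain ⟨N, b, c, hTs⟩ := distinguished_cocone_triangle s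
    have hc : c = 0 := by
      have h31 : c ≫ (shiftFunctor C (1 : ℤ)).map s = 0 := comp_distTriang_mor_zero₃₁ _ hTs
      haveI : IsSplitMono ((shiftFunctor C (1 : ℤ)).map s) :=
        ⟨⟨⟨(shiftFunctor C (1 : ℤ)).map vi, by
          rw [← Functor.map_comp, hs, CategoryTheory.Functor.map_id]⟩⟩⟩
      exact zero_of_comp_mono _ h31
    obtain ⟨e', -⟩ := exists_iso_binaryBiproduct_of_distTriang _ hTs hc
    rcases hZ.2 _ _ e' with hz | hz
    · exact (hfam i₀).1 hz
    · haveI : IsIso s := ((Triangle.mk s b c).isZero₃_iff_isIso₁ hTs).1 hz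
      have hvis : vi ≫ s = 𝟙 Z := by
        calc vi ≫ s = (inv s ≫ s) ≫ vi ≫ s := by rw [IsIso.inv_hom_id, Category.id_comp]
          _ = inv s ≫ (s ≫ vi) ≫ s := by simp only [Category.assoc]
          _ = 𝟙 Z := by rw [hs, Category.id_comp, IsIso.inv_hom_id]
      apply hu
      have h12 : u ≫ v = 0 := comp_distTriang_mor_zero₁₂ _ hT
      calc u = u ≫ vi ≫ s := by rw [hvis, Category.comp_id]
        _ = (u ≫ v) ≫ θ.hom ≫ biproduct.π fam i₀ ≫ s := by
          simp only [hvi, Category.assoc]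
        _ = 0 := by rw [h12, zero_comp]
  obtain ⟨i, hvi, hwi⟩ := key
  exact ⟨fam i, hfam i, ⟨v ≫ θ.hom ≫ biproduct.π fam i, hvi⟩,
    ⟨biproduct.ι fam i ≫ θ.inv ≫ w, hwi⟩⟩

/-- From a nonzero non-invertible map out of `Z`, produce a nonzero non-invertible map
into `Z⟦1⟧` from an indecomposable. -/
lemma exists_incoming (hdec : EveryObjectDecomposes C) {Z Y : C}
    (hZ : Indec C Z) (hY : Indec C Y) (f : Z ⟶ Y) (hf : f ≠ 0) (hni : ¬ IsIso f) :
    ∃ W : C, Indec C W ∧ ∃ g : W ⟶ (shiftFunctor C (1 : ℤ)).obj Z, g ≠ 0 ∧ ¬ IsIso g := by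
  obtain ⟨W₀, g, h, hT⟩ := distinguished_cocone_triangle f
  have hh : h ≠ 0 := by
    intro h0
    obtain ⟨e, -⟩ := exists_iso_binaryBiproduct_of_distTriang _ hT h0
    rcases hY.2 _ _ e with hz | hz
    · exact hZ.1 hz
    · exact hni (((Triangle.mk f g h).isZero₃_iff_isIso₁ hT).1 hz)
  obtain ⟨n, fam, hfam, ⟨θ⟩⟩ := hdec W₀
  obtain ⟨j, hj⟩ : ∃ j, biproduct.ι fam j ≫ θ.inv ≫ h ≠ 0 := by
    by_contra hz
    push_neg at hz
    apply hh
    have hih : θ.inv ≫ h = 0 := biproduct.hom_ext' _ _ fun j => by rw [hz j, comp_zero]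
    calc h = θ.hom ≫ θ.inv ≫ h := by rw [Iso.hom_inv_id_assoc]
      _ = 0 := by rw [hih, comp_zero]
  refine ⟨fam j, hfam j, biproduct.ι fam j ≫ θ.inv ≫ h, hj, ?_⟩
  intro hiso
  have h31 : h ≫ (shiftFunctor C (1 : ℤ)).map f = 0 := comp_distTriang_mor_zero₃₁ _ hT
  apply hf
  apply (shiftFunctor C (1 : ℤ)).map_injective
  rw [Functor.map_zero]
  calc (shiftFunctor C (1 : ℤ)).map f
      = inv (biproduct.ι fam j ≫ θ.inv ≫ h) ≫ (biproduct.ι fam j ≫ θ.inv ≫ h) ≫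
        (shiftFunctor C (1 : ℤ)).map f := by rw [IsIso.inv_hom_id_assoc]
    _ = inv (biproduct.ι fam j ≫ θ.inv ≫ h) ≫ biproduct.ι fam j ≫ θ.inv ≫
        (h ≫ (shiftFunctor C (1 : ℤ)).map f) := by simp only [Category.assoc]
    _ = 0 := by rw [h31, comp_zero, comp_zero, comp_zero]

/-- In a non-degenerate block, there is a chain of nonzero morphisms between
indecomposables from `Z` to `Z⟦1⟧`. -/
lemma chain_self_shift (hdec : EveryObjectDecomposes C)
    (hnd : ∀ X : C, Indec C X → ∃ Y : C, Indec C Y ∧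
        ((∃ f : Y ⟶ X, f ≠ 0 ∧ ¬ IsIso f) ∨ (∃ f : X ⟶ Y, f ≠ 0 ∧ ¬ IsIso f)))
    (Z : C) (hZ : Indec C Z) :
    Relation.ReflTransGen (StepRel (C := C)) Z ((shiftFunctor C (1 : ℤ)).obj Z) := by
  have build : ∀ (Z' Y : C), Indec C Z' → Indec C Y → ∀ u : Y ⟶ Z', u ≠ 0 → ¬ IsIso u →
      Relation.ReflTransGen (StepRel (C := C)) Z' ((shiftFunctor C (1 : ℤ)).obj Z') := by
    intro Z' Y hZ' hY u hu hni
    obtain ⟨W, hW, ⟨a, ha⟩, ⟨b, hb⟩⟩ := exists_middle hdec hZ' hY u hu hni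
    exact ((Relation.ReflTransGen.refl.tail ⟨hW, a, ha⟩).tail
      ⟨indec_shift 1 hY, b, hb⟩).tail
      ⟨indec_shift 1 hZ', (shiftFunctor C (1 : ℤ)).map u, shift_map_ne 1 hu⟩
  rcases hnd Z hZ with ⟨Y, hY, ⟨u, hu, hni⟩ | ⟨f, hf, hni⟩⟩
  · exact build Z Y hZ hY u hu hni
  · obtain ⟨W, hW, g, hg, hgni⟩ := exists_incoming hdec hZ hY f hf hni
    have c1 := build _ W (indec_shift 1 hZ) hW g hg hgni
    have c2 := chain_shift (-1) c1
    refine chain_iso_head ((shiftEquiv C (1 : ℤ)).unitIso.app Z) hZ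
      (chain_iso_tail c2 ?_ (((shiftEquiv C (1 : ℤ)).unitIso.app
        ((shiftFunctor C (1 : ℤ)).obj Z)).symm))
    exact indec_shift (-1) (indec_shift 1 hZ)

/-- Convert a `ReflTransGen` chain to the explicit `Fin`-indexed statement. -/
lemma chain_to_fin {X Y : C} (hX : Indec C X)
    (h : Relation.ReflTransGen (StepRel (C := C)) X Y) :
    ∃ (t : ℕ) (f : Fin (t + 1) → C), f 0 = X ∧ f (Fin.last t) = Y ∧
      (∀ i, Indec C (f i)) ∧
      ∀ i : Fin t, ∃ g : f i.castSucc ⟶ f i.succ, g ≠ 0 := by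
  induction h with
  | refl => exact ⟨0, fun _ => X, rfl, rfl, fun _ => hX, fun i => i.elim0⟩
  | @tail b c hab hbc ih =>
    obtain ⟨t, f, h0, hlast, hind, hedge⟩ := ih
    obtain ⟨hic, g, hg⟩ := hbc
    refine ⟨t + 1, Fin.snoc f c, ?_, ?_, ?_, ?_⟩
    · rw [show ((0 : Fin (t + 2))) = Fin.castSucc 0 from rfl, Fin.snoc_castSucc]
      exact h0
    · rw [Fin.snoc_last]
    · intro i
      induction i using Fin.lastCases with
      | last => rw [Fin.snoc_last]; exact hic
      | cast j => rw [Fin.snoc_castSucc]; exact hind j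
    · intro i
      induction i using Fin.lastCases with
      | last =>
        rw [Fin.succ_last, Fin.snoc_last, Fin.snoc_castSucc, hlast]
        exact ⟨g, hg⟩
      | cast j =>
        rw [Fin.succ_castSucc, Fin.snoc_castSucc, Fin.snoc_castSucc]
        exact hedge j

end Aux

variable (C)

/-- in a non-degenerate block, any path from `X` to `Y` can be refined to a
path `X = X₀, X₁, …, X_t = Y` with `Hom(X_{i-1}, X_i) ≠ 0` for all `i`. -/
theorem stmt_12 (hblock : IsBlock C)
    (hnd : ∀ X : C, Indec C X → ∃ Y : C, Indec C Y ∧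
        ((∃ f : Y ⟶ X, f ≠ 0 ∧ ¬ IsIso f) ∨ (∃ f : X ⟶ Y, f ≠ 0 ∧ ¬ IsIso f)))
    (X Y : C) (h : HasPath C X Y) :
    ∃ (t : ℕ) (f : Fin (t + 1) → C), f 0 = X ∧ f (Fin.last t) = Y ∧
      (∀ i, Indec C (f i)) ∧
      ∀ i : Fin t, ∃ g : f i.castSucc ⟶ f i.succ, g ≠ 0 := by
  obtain ⟨-, hdec, -⟩ := hblock
  obtain ⟨n, f, h0, hl, hind, hedge⟩ := h
  have main : ∀ i : Fin (n + 1), Relation.ReflTransGen (StepRel (C := C)) (f 0) (f i) := by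
    intro i
    induction i using Fin.induction with
    | zero => exact Relation.ReflTransGen.refl
    | succ j ih =>
      rcases hedge j with ⟨g, hg⟩ | hiso
      · exact ih.tail ⟨hind _, g, hg⟩
      · obtain ⟨e⟩ := hiso
        exact ih.trans (chain_iso_tail
          (chain_self_shift hdec hnd (f j.castSucc) (hind _)) (hind _) e.symm)
  have hX : Indec C X := h0 ▸ hind 0
  have hchain := main (Fin.last n)
  rw [h0, hl] at hchain
  exact chain_to_fin hX hchain
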